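/- arXiv:2306.01963 — 2 statements merged into one kernel-verified Lean document; each statement's English description precedes it below -/
import Mathlib

section
/- Let (θ₁, φ₁) and (θ₂, φ₂) be independent, each uniformly distributed on [0,2π]², and set h₁ := sin θ₁·sin φ₁, h₂ := sin θ₂·sin φ₂. Then for every real a, E[cos(a·(h₁ − h₂))] = J₀(a/2)⁴, where the expectation is the normalized integral over [0,2π]⁴. -/
open Real MeasureTheory

/-- Bessel function of the first kind of order zero (integral representation). -/
noncomputable def J₀ (x : ℝ) : ℝ :=
  (1 / (2 * π)) * ∫ t in (0:ℝ)..(2 * π), Real.cos (x * Real.sin t)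

/-- Expectation over two independent pairs of angles, each uniform on `[0, 2π]²`. -/
noncomputable def E4 (f : ℝ → ℝ → ℝ → ℝ → ℝ) : ℝ :=
  (1 / (2 * π) ^ 4) *
    ∫ θ₁ in (0:ℝ)..(2 * π), ∫ φ₁ in (0:ℝ)..(2 * π),
      ∫ θ₂ in (0:ℝ)..(2 * π), ∫ φ₂ in (0:ℝ)..(2 * π), f θ₁ φ₁ θ₂ φ₂

/-!
Expanding `cos (a * (h₁ - h₂))` by the subtraction formula, the cross term
`sin (a * h₁) * sin (a * h₂)` averages to zero because `φ ↦ φ + π` flips the sign of `sin φ`;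
the two pairs of angles being independent, the expectation is `E[cos (a * h)]²`.
By the product-to-sum formula `a * sin θ * sin φ = c * cos (θ - φ) - c * cos (θ + φ)` with
`c = a / 2`, and `(θ, φ) ↦ (θ - φ, θ + φ)` preserves the uniform measure on the torus, so
`E[cos (a * h)] = E[cos (c * cos u - c * cos v)]` for independent uniform `u, v`; once more the
sine cross term vanishes and this is `J₀ c ^ 2`.
-/

section

variable {E : Type*} [NormedAddCommGroup E] [NormedSpace ℝ E] {T : ℝ}

namespace Function

variable {f : ℝ → E}

theorem Periodic.intervalIntegral_comp_add_right (hf : Periodic f T) (c : ℝ) :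
    ∫ x in (0:ℝ)..T, f (x + c) = ∫ x in (0:ℝ)..T, f x := by
  simpa [intervalIntegral.integral_comp_add_right, add_comm] using hf.intervalIntegral_add_eq c 0

theorem Periodic.intervalIntegral_comp_neg (hf : Periodic f T) :
    ∫ x in (0:ℝ)..T, f (-x) = ∫ x in (0:ℝ)..T, f x := by
  simpa [intervalIntegral.integral_comp_neg] using hf.intervalIntegral_add_eq (-T) 0

theorem Periodic.intervalIntegral_comp_intCast_mul_add (hf : Periodic f T)
    (hfi : ∀ t₁ t₂, IntervalIntegrable f volume t₁ t₂) {n : ℤ} (hn : n ≠ 0) (d : ℝ) :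
    ∫ x in (0:ℝ)..T, f (n * x + d) = ∫ x in (0:ℝ)..T, f x := by
  have hn' : (n : ℝ) ≠ 0 := Int.cast_ne_zero.mpr hn
  rw [intervalIntegral.integral_comp_mul_add f hn' d, mul_zero, zero_add, add_comm,
    ← zsmul_eq_mul, hf.intervalIntegral_add_zsmul_eq n d hfi, hf.intervalIntegral_add_eq d 0,
    zero_add, ← Int.cast_smul_eq_zsmul ℝ, smul_smul, inv_mul_cancel₀ hn', one_smul]

theorem Antiperiodic.intervalIntegral_eq_zero {c : ℝ} (hf : Antiperiodic f c)
    (hT : Periodic f T) : ∫ x in (0:ℝ)..T, f x = 0 := by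
  have h := hT.intervalIntegral_comp_add_right c
  simp only [hf _, intervalIntegral.integral_neg] at h
  rw [neg_eq_iff_add_eq_zero, ← two_smul ℝ, smul_eq_zero] at h
  exact h.resolve_left two_ne_zero

end Function

theorem intervalIntegral_intervalIntegral_swap_of_continuous {F : ℝ → ℝ → E}
    (hF : Continuous F.uncurry) (a b c d : ℝ) :
    ∫ x in a..b, ∫ y in c..d, F x y = ∫ y in c..d, ∫ x in a..b, F x y :=
  intervalIntegral_intervalIntegral_swap <|
    (hF.continuousOn.integrableOn_compact (isCompact_uIcc.prod isCompact_uIcc)).mono_set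
      (Set.prod_mono Set.uIoc_subset_uIcc Set.uIoc_subset_uIcc)

-- `(θ, φ) ↦ (θ - φ, θ + φ)` is a two-to-one cover of the torus `(ℝ / Tℤ)²` with Jacobian `2`.
theorem intervalIntegral_intervalIntegral_comp_sub_add {F : ℝ → ℝ → E}
    (hF : Continuous F.uncurry) (h₁ : ∀ v, Function.Periodic (F · v) T)
    (h₂ : ∀ u, Function.Periodic (F u) T) :
    ∫ θ in (0:ℝ)..T, ∫ φ in (0:ℝ)..T, F (θ - φ) (θ + φ)
      = ∫ u in (0:ℝ)..T, ∫ v in (0:ℝ)..T, F u v := by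
  have shift (θ : ℝ) : ∫ φ in (0:ℝ)..T, F (θ - φ) (θ + φ)
      = ∫ φ in (0:ℝ)..T, F (-φ) (2 * θ + φ) := by
    have hper : Function.Periodic (fun φ => F (θ - φ) (θ + φ)) T := fun φ => by
      simp only [sub_add_eq_sub_sub, ← add_assoc, h₂ _ (θ + φ), (h₁ _).sub_eq]
    rw [← hper.intervalIntegral_comp_add_right θ]
    congr 1 with φ
    congr 1 <;> ring
  have double (φ : ℝ) : ∫ θ in (0:ℝ)..T, F (-φ) (2 * θ + φ) = ∫ v in (0:ℝ)..T, F (-φ) v := by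
    have hc : Continuous (F (-φ)) := by fun_prop
    simpa using (h₂ (-φ)).intervalIntegral_comp_intCast_mul_add (fun _ _ => hc.intervalIntegrable _ _)
      two_ne_zero φ
  have hG : Function.Periodic (fun u => ∫ v in (0:ℝ)..T, F u v) T := fun u => by
    simp only [h₁ _ u]
  simp_rw [shift]
  rw [intervalIntegral_intervalIntegral_swap_of_continuous (by fun_prop)]
  simp_rw [double]
  exact hG.intervalIntegral_comp_neg

end

theorem integral_cos_const_sub_of_integral_sin_eq_zero {f : ℝ → ℝ} (hf : Continuous f)
    {a b : ℝ} (h : ∫ x in a..b, sin (f x) = 0) (C : ℝ) :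
    ∫ x in a..b, cos (C - f x) = cos C * ∫ x in a..b, cos (f x) := by
  simp_rw [cos_sub]
  rw [intervalIntegral.integral_add (Continuous.intervalIntegrable (by fun_prop) a b)
    (Continuous.intervalIntegrable (by fun_prop) a b),
    intervalIntegral.integral_const_mul, intervalIntegral.integral_const_mul, h, mul_zero,
    add_zero]

theorem integral_cos_mul_sin_eq_J₀ (b : ℝ) :
    ∫ u in (0:ℝ)..(2 * π), cos (b * sin u) = 2 * π * J₀ b := by
  rw [J₀]
  field_simp

theorem integral_cos_mul_cos_eq_J₀ (b : ℝ) :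
    ∫ u in (0:ℝ)..(2 * π), cos (b * cos u) = 2 * π * J₀ b := by
  have hper : Function.Periodic (fun u => cos (b * cos u)) (2 * π) := fun u => by
    simp only [cos_add_two_pi]
  rw [← hper.intervalIntegral_comp_add_right (π / 2), ← integral_cos_mul_sin_eq_J₀]
  simp only [cos_add_pi_div_two, mul_neg, cos_neg]

theorem integral_sin_mul_sin_eq_zero (b : ℝ) :
    ∫ u in (0:ℝ)..(2 * π), sin (b * sin u) = 0 :=
  Function.Antiperiodic.intervalIntegral_eq_zero (c := π)
    (fun u => by simp only [sin_add_pi, mul_neg, sin_neg])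
    (fun u => by simp only [sin_add_two_pi])

theorem integral_sin_mul_cos_eq_zero (b : ℝ) :
    ∫ u in (0:ℝ)..(2 * π), sin (b * cos u) = 0 :=
  Function.Antiperiodic.intervalIntegral_eq_zero (c := π)
    (fun u => by simp only [cos_add_pi, mul_neg, sin_neg])
    (fun u => by simp only [cos_add_two_pi])

theorem integral_integral_cos_mul_sin_mul_sin (a : ℝ) :
    ∫ θ in (0:ℝ)..(2 * π), ∫ φ in (0:ℝ)..(2 * π), cos (a * (sin θ * sin φ))
      = (2 * π * J₀ (a / 2)) ^ 2 := by
  have product_to_sum (θ φ : ℝ) :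
      a * (sin θ * sin φ) = a / 2 * cos (θ - φ) - a / 2 * cos (θ + φ) := by
    rw [cos_sub, cos_add]; ring
  simp_rw [product_to_sum]
  rw [intervalIntegral_intervalIntegral_comp_sub_add
    (F := fun u v => cos (a / 2 * cos u - a / 2 * cos v)) (by fun_prop)
    (fun v u => by simp only [cos_add_two_pi]) (fun u v => by simp only [cos_add_two_pi])]
  simp_rw [integral_cos_const_sub_of_integral_sin_eq_zero (f := fun v => a / 2 * cos v)
    (by fun_prop) (integral_sin_mul_cos_eq_zero _), intervalIntegral.integral_mul_const,
    integral_cos_mul_cos_eq_J₀]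
  ring

theorem stmt_2 (a : ℝ) :
    E4 (fun θ₁ φ₁ θ₂ φ₂ =>
      Real.cos (a * (Real.sin θ₁ * Real.sin φ₁ - Real.sin θ₂ * Real.sin φ₂)))
    = (J₀ (a / 2)) ^ 4 := by
  have inner (θ₁ φ₁ θ₂ : ℝ) :
      ∫ φ₂ in (0:ℝ)..(2 * π), cos (a * (sin θ₁ * sin φ₁ - sin θ₂ * sin φ₂))
        = cos (a * (sin θ₁ * sin φ₁)) * ∫ φ₂ in (0:ℝ)..(2 * π), cos (a * (sin θ₂ * sin φ₂)) := by
    simp_rw [mul_sub, ← mul_assoc a (sin θ₂)]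
    exact integral_cos_const_sub_of_integral_sin_eq_zero (f := fun φ => a * sin θ₂ * sin φ)
      (by fun_prop) (integral_sin_mul_sin_eq_zero _) _
  simp only [E4, inner, intervalIntegral.integral_const_mul, intervalIntegral.integral_mul_const,
    integral_integral_cos_mul_sin_mul_sin]
  field_simp
end

section
/- Let (θ₁, φ₁) and (θ₂, φ₂) be independent, each uniformly distributed on [0,2π]², and set h₁ := sin θ₁·sin φ₁, h₂ := sin θ₂·sin φ₂. Fix a real number a and a natural number n_R ≥ 1, and define F := Σ_{s=1}^{n_R−1} (n_R − s)·cos(s·a·(h₁ − h₂)). Then Var(F) = Σ_{s₂=1}^{n_R−1} Σ_{s₁=1}^{n_R−1} (n_R − s₁)(n_R − s₂)·(1/2)·(J₀((s₁ + s₂)·a/2)⁴ + J₀(|s₁ − s₂|·a/2)⁴) − (Σ_{s=1}^{n_R−1} (n_R − s)·J₀(s·a/2)⁴)². -/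
open Real MeasureTheory Finset

noncomputable def G (x : ℝ) : ℝ := ∫ t in (0:ℝ)..(2 * π), Real.cos (x * Real.sin t)

@[fun_prop]
lemma contG : Continuous G := by
  apply intervalIntegral.continuous_parametric_intervalIntegral_of_continuous'
    (f := fun x t => Real.cos (x * Real.sin t))
  fun_prop

lemma G_even (x : ℝ) : G (-x) = G x := by
  unfold G; simp [neg_mul]

lemma sin_int (x : ℝ) : ∫ t in (0:ℝ)..(2 * π), Real.sin (x * Real.sin t) = 0 := by
  have h := intervalIntegral.integral_comp_sub_left
    (a := (0:ℝ)) (b := 2 * π) (fun t => Real.sin (x * Real.sin t)) (2 * π)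
  simp only [sub_self, sub_zero] at h
  have h2 : ∀ t : ℝ, Real.sin (x * Real.sin (2 * π - t)) = -Real.sin (x * Real.sin t) := by
    intro t
    rw [show (2 * π - t) = -t + 2 * π by ring, Real.sin_add_two_pi, Real.sin_neg, mul_neg,
      Real.sin_neg]
  simp only [h2, intervalIntegral.integral_neg] at h
  linarith

lemma cos_shift (A x : ℝ) :
    ∫ φ in (0:ℝ)..(2 * π), Real.cos (A + x * Real.sin φ) = Real.cos A * G x := by
  have h2 : ∀ φ : ℝ, Real.cos (A + x * Real.sin φ)
      = Real.cos A * Real.cos (x * Real.sin φ) - Real.sin A * Real.sin (x * Real.sin φ) := by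
    intro φ; rw [Real.cos_add]
  simp only [h2]
  rw [intervalIntegral.integral_sub (by apply Continuous.intervalIntegrable; fun_prop)
      (by apply Continuous.intervalIntegrable; fun_prop),
    intervalIntegral.integral_const_mul, intervalIntegral.integral_const_mul, sin_int]
  simp [G]

lemma P2 (y : ℝ) :
    ∫ t in (0:ℝ)..(2 * π), ∫ u in (0:ℝ)..(2 * π), Real.cos (y * Real.sin t + y * Real.sin u)
      = G y ^ 2 := by
  have h : ∀ t : ℝ, ∫ u in (0:ℝ)..(2 * π), Real.cos (y * Real.sin t + y * Real.sin u)
      = Real.cos (y * Real.sin t) * G y := fun t => cos_shift _ y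
  simp only [h]
  rw [intervalIntegral.integral_mul_const]
  rw [show (∫ t in (0:ℝ)..(2 * π), Real.cos (y * Real.sin t)) = G y from rfl]
  ring

lemma stepC (B d : ℝ) :
    ∫ t in (0:ℝ)..(2 * π), Real.cos (B * Real.cos (t - d)) = G B := by
  rw [intervalIntegral.integral_comp_sub_right (fun x => Real.cos (B * Real.cos x)) d]
  have per : Function.Periodic (fun x => Real.cos (B * Real.cos x)) (2 * π) := by
    intro x; simp [Real.cos_add_two_pi]
  have e1 : ∫ x in (0:ℝ) - d..(2 * π) - d, Real.cos (B * Real.cos x)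
      = ∫ x in (0:ℝ)..(2 * π), Real.cos (B * Real.cos x) := by
    have h := per.intervalIntegral_add_eq (0 - d) 0
    rw [show (0:ℝ) - d = -d by ring, show 2 * π - d = -d + 2 * π by ring]
    simpa [zero_add] using h
  rw [e1]
  have e2 : ∀ x : ℝ, Real.cos (B * Real.cos x)
      = (fun y => Real.cos (B * Real.sin y)) (x + π / 2) := by
    intro x; simp [Real.sin_add_pi_div_two]
  simp only [e2]
  rw [intervalIntegral.integral_comp_add_right (fun y => Real.cos (B * Real.sin y)) (π / 2)]
  have per2 : Function.Periodic (fun y => Real.cos (B * Real.sin y)) (2 * π) := by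
    intro x; simp [Real.sin_add_two_pi]
  have := per2.intervalIntegral_add_eq (0 + π / 2) 0
  rw [show (2 * π + π / 2) = 0 + π / 2 + 2 * π by ring]
  simpa [zero_add, G] using this

lemma stepA (c t : ℝ) :
    ∫ u in (0:ℝ)..(2 * π), Real.cos (c / 2 * Real.sin t + c / 2 * Real.sin u)
      = ∫ v in (0:ℝ)..(2 * π), Real.cos (c * Real.sin (v / 2) * Real.cos (t - v / 2)) := by
  have hpt : ∀ u : ℝ, Real.cos (c / 2 * Real.sin t + c / 2 * Real.sin u)
      = (fun v => Real.cos (c * Real.sin (v / 2) * Real.cos (t - v / 2))) (u + t) := by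
    intro u
    simp only
    congr 1
    have h : Real.sin ((t + u) / 2 + (t - u) / 2) + Real.sin ((t + u) / 2 - (t - u) / 2)
        = 2 * Real.sin ((t + u) / 2) * Real.cos ((t - u) / 2) := by
      rw [Real.sin_add, Real.sin_sub]; ring
    rw [show (t + u) / 2 + (t - u) / 2 = t by ring, show (t + u) / 2 - (t - u) / 2 = u by ring] at h
    rw [show ((u + t) / 2) = ((t + u) / 2) by ring, show t - (t + u) / 2 = (t - u) / 2 by ring]
    linear_combination (c / 2) * h
  simp only [hpt]
  rw [intervalIntegral.integral_comp_add_right (fun v => Real.cos (c * Real.sin (v / 2) * Real.cos (t - v / 2))) t]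
  have per : Function.Periodic (fun v => Real.cos (c * Real.sin (v / 2) * Real.cos (t - v / 2))) (2 * π) := by
    intro v
    simp only
    have h1 : Real.sin ((v + 2 * π) / 2) = -Real.sin (v / 2) := by
      rw [show (v + 2 * π) / 2 = v / 2 + π by ring, Real.sin_add_pi]
    have h2 : Real.cos (t - (v + 2 * π) / 2) = -Real.cos (t - v / 2) := by
      rw [show t - (v + 2 * π) / 2 = (t - v / 2) - π by ring, Real.cos_sub_pi]
    rw [h1, h2, show c * -Real.sin (v / 2) * -Real.cos (t - v / 2)
      = c * Real.sin (v / 2) * Real.cos (t - v / 2) by ring]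
  have := per.intervalIntegral_add_eq (0 + t) 0
  rw [show (2 * π + t) = 0 + t + 2 * π by ring]
  simpa [zero_add] using this

lemma Dlem (c : ℝ) :
    ∫ θ in (0:ℝ)..(2 * π), G (c * Real.sin θ) = G (c / 2) ^ 2 := by
  have h2π : (0:ℝ) ≤ 2 * π := by positivity
  -- Step E : split into two halves
  have hint : ∀ a b : ℝ, IntervalIntegrable (fun θ => G (c * Real.sin θ)) volume a b := by
    intro a b; apply Continuous.intervalIntegrable; fun_prop
  have stepE : ∫ θ in (0:ℝ)..(2 * π), G (c * Real.sin θ)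
      = 2 * ∫ θ in (0:ℝ)..π, G (c * Real.sin θ) := by
    have split := intervalIntegral.integral_add_adjacent_intervals (hint 0 π) (hint π (2 * π))
    have e : ∫ θ in π..(2 * π), G (c * Real.sin θ) = ∫ θ in (0:ℝ)..π, G (c * Real.sin θ) := by
      have h := intervalIntegral.integral_comp_add_right
        (a := (0:ℝ)) (b := π) (fun θ => G (c * Real.sin θ)) π
      have hpt : ∀ x : ℝ, G (c * Real.sin (x + π)) = G (c * Real.sin x) := by
        intro x; rw [Real.sin_add_pi, mul_neg, G_even]
      simp only [hpt] at h
      rw [h, show (0:ℝ) + π = π by ring, show π + π = 2 * π by ring]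
    linarith
  -- Step D
  have stepD : ∫ v in (0:ℝ)..(2 * π), G (c * Real.sin (v / 2))
      = 2 * ∫ θ in (0:ℝ)..π, G (c * Real.sin θ) := by
    have h := intervalIntegral.integral_comp_div (a := (0:ℝ)) (b := 2 * π)
      (f := fun θ => G (c * Real.sin θ)) (c := (2:ℝ)) two_ne_zero
    rw [h]
    norm_num [smul_eq_mul, mul_div_assoc]
  -- Fubini
  have fub : ∫ t in (0:ℝ)..(2 * π), ∫ v in (0:ℝ)..(2 * π),
        Real.cos (c * Real.sin (v / 2) * Real.cos (t - v / 2))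
      = ∫ v in (0:ℝ)..(2 * π), ∫ t in (0:ℝ)..(2 * π),
        Real.cos (c * Real.sin (v / 2) * Real.cos (t - v / 2)) := by
    simp_rw [intervalIntegral.integral_of_le h2π]
    apply MeasureTheory.integral_integral_swap
    rw [Measure.prod_restrict]
    apply MeasureTheory.IntegrableOn.mono_set
      (t := Set.Icc (0:ℝ) (2 * π) ×ˢ Set.Icc (0:ℝ) (2 * π))
    · exact ContinuousOn.integrableOn_compact (isCompact_Icc.prod isCompact_Icc)
        (Continuous.continuousOn (by fun_prop))
    · exact Set.prod_mono Set.Ioc_subset_Icc_self Set.Ioc_subset_Icc_self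
  -- assemble
  calc ∫ θ in (0:ℝ)..(2 * π), G (c * Real.sin θ)
      = 2 * ∫ θ in (0:ℝ)..π, G (c * Real.sin θ) := stepE
    _ = ∫ v in (0:ℝ)..(2 * π), G (c * Real.sin (v / 2)) := stepD.symm
    _ = ∫ v in (0:ℝ)..(2 * π), ∫ t in (0:ℝ)..(2 * π),
          Real.cos (c * Real.sin (v / 2) * Real.cos (t - v / 2)) := by
        congr 1; funext v
        exact (stepC (c * Real.sin (v / 2)) (v / 2)).symm
    _ = ∫ t in (0:ℝ)..(2 * π), ∫ v in (0:ℝ)..(2 * π),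
          Real.cos (c * Real.sin (v / 2) * Real.cos (t - v / 2)) := fub.symm
    _ = ∫ t in (0:ℝ)..(2 * π), ∫ u in (0:ℝ)..(2 * π),
          Real.cos (c / 2 * Real.sin t + c / 2 * Real.sin u) := by
        congr 1; funext t
        exact (stepA c t).symm
    _ = G (c / 2) ^ 2 := P2 (c / 2)

lemma J₀_eq (x : ℝ) : J₀ x = (1 / (2 * π)) * G x := rfl

lemma E4sum {ι : Type*} (S : Finset ι) (w k : ι → ℝ) :
    E4 (fun θ₁ φ₁ θ₂ φ₂ => ∑ i ∈ S, w i *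
        Real.cos (k i * (Real.sin θ₁ * Real.sin φ₁ - Real.sin θ₂ * Real.sin φ₂)))
      = ∑ i ∈ S, w i * (J₀ (k i / 2)) ^ 4 := by
  have lev1 : ∀ θ₁ φ₁ θ₂ : ℝ, (∫ φ₂ in (0:ℝ)..(2 * π), ∑ i ∈ S, w i *
        Real.cos (k i * (Real.sin θ₁ * Real.sin φ₁ - Real.sin θ₂ * Real.sin φ₂)))
      = ∑ i ∈ S, w i * (Real.cos (k i * (Real.sin θ₁ * Real.sin φ₁)) * G (k i * Real.sin θ₂)) := by
    intro θ₁ φ₁ θ₂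
    rw [intervalIntegral.integral_finset_sum
      (fun i _ => (Continuous.intervalIntegrable (by fun_prop) _ _))]
    refine Finset.sum_congr rfl fun i _ => ?_
    rw [intervalIntegral.integral_const_mul]
    congr 1
    have hpt : ∀ φ₂ : ℝ, k i * (Real.sin θ₁ * Real.sin φ₁ - Real.sin θ₂ * Real.sin φ₂)
        = k i * (Real.sin θ₁ * Real.sin φ₁) + (-(k i * Real.sin θ₂)) * Real.sin φ₂ := by
      intro φ₂; ring
    simp only [hpt]
    rw [cos_shift, G_even]
  have lev2 : ∀ θ₁ φ₁ : ℝ, (∫ θ₂ in (0:ℝ)..(2 * π), ∑ i ∈ S, w i *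
        (Real.cos (k i * (Real.sin θ₁ * Real.sin φ₁)) * G (k i * Real.sin θ₂)))
      = ∑ i ∈ S, w i * (Real.cos (k i * (Real.sin θ₁ * Real.sin φ₁)) * G (k i / 2) ^ 2) := by
    intro θ₁ φ₁
    rw [intervalIntegral.integral_finset_sum
      (fun i _ => (Continuous.intervalIntegrable (by fun_prop) _ _))]
    refine Finset.sum_congr rfl fun i _ => ?_
    rw [intervalIntegral.integral_const_mul, intervalIntegral.integral_const_mul, Dlem]
  have lev3 : ∀ θ₁ : ℝ, (∫ φ₁ in (0:ℝ)..(2 * π), ∑ i ∈ S, w i *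
        (Real.cos (k i * (Real.sin θ₁ * Real.sin φ₁)) * G (k i / 2) ^ 2))
      = ∑ i ∈ S, w i * (G (k i * Real.sin θ₁) * G (k i / 2) ^ 2) := by
    intro θ₁
    rw [intervalIntegral.integral_finset_sum
      (fun i _ => (Continuous.intervalIntegrable (by fun_prop) _ _))]
    refine Finset.sum_congr rfl fun i _ => ?_
    have hpt : ∀ φ₁ : ℝ, w i * (Real.cos (k i * (Real.sin θ₁ * Real.sin φ₁)) * G (k i / 2) ^ 2)
        = (w i * G (k i / 2) ^ 2) * Real.cos ((k i * Real.sin θ₁) * Real.sin φ₁) := by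
      intro φ₁; rw [mul_assoc (k i)]; ring
    simp only [hpt]
    rw [intervalIntegral.integral_const_mul]
    rw [show (∫ φ₁ in (0:ℝ)..(2 * π), Real.cos ((k i * Real.sin θ₁) * Real.sin φ₁))
      = G (k i * Real.sin θ₁) from rfl]
    ring
  have lev4 : (∫ θ₁ in (0:ℝ)..(2 * π), ∑ i ∈ S, w i *
        (G (k i * Real.sin θ₁) * G (k i / 2) ^ 2))
      = ∑ i ∈ S, w i * (G (k i / 2) ^ 2 * G (k i / 2) ^ 2) := by
    rw [intervalIntegral.integral_finset_sum
      (fun i _ => (Continuous.intervalIntegrable (by fun_prop) _ _))]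
    refine Finset.sum_congr rfl fun i _ => ?_
    have hpt : ∀ θ₁ : ℝ, w i * (G (k i * Real.sin θ₁) * G (k i / 2) ^ 2)
        = G (k i * Real.sin θ₁) * (w i * G (k i / 2) ^ 2) := by intro θ₁; ring
    simp only [hpt]
    rw [intervalIntegral.integral_mul_const, Dlem]
    ring
  unfold E4
  simp only [lev1, lev2, lev3, lev4, J₀_eq, Finset.mul_sum]
  refine Finset.sum_congr rfl fun i _ => ?_
  ring

lemma J₀_even (x : ℝ) : J₀ (-x) = J₀ x := by
  unfold J₀; simp [neg_mul]

lemma J₀_abs (d b : ℝ) : J₀ (|d| * b / 2) = J₀ (d * b / 2) := by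
  rcases abs_cases d with ⟨h, _⟩ | ⟨h, _⟩
  · rw [h]
  · rw [h, neg_mul, neg_div, J₀_even]

theorem stmt_12 (a : ℝ) (nR : ℕ) (hR : 1 ≤ nR) :
    E4 (fun θ₁ φ₁ θ₂ φ₂ =>
      (∑ s ∈ Finset.Icc 1 (nR - 1), ((nR : ℝ) - s) *
        Real.cos ((s : ℝ) * a *
          (Real.sin θ₁ * Real.sin φ₁ - Real.sin θ₂ * Real.sin φ₂))) ^ 2) -
    (E4 (fun θ₁ φ₁ θ₂ φ₂ =>
      ∑ s ∈ Finset.Icc 1 (nR - 1), ((nR : ℝ) - s) *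
        Real.cos ((s : ℝ) * a *
          (Real.sin θ₁ * Real.sin φ₁ - Real.sin θ₂ * Real.sin φ₂)))) ^ 2
    = (∑ s₂ ∈ Finset.Icc 1 (nR - 1), ∑ s₁ ∈ Finset.Icc 1 (nR - 1),
        ((nR : ℝ) - s₁) * ((nR : ℝ) - s₂) * (1 / 2) *
          ((J₀ (((s₁ : ℝ) + (s₂ : ℝ)) * a / 2)) ^ 4 +
           (J₀ (|(s₁ : ℝ) - (s₂ : ℝ)| * a / 2)) ^ 4)) -
      (∑ s ∈ Finset.Icc 1 (nR - 1), ((nR : ℝ) - s) * (J₀ ((s : ℝ) * a / 2)) ^ 4) ^ 2 := by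
  set S := Finset.Icc 1 (nR - 1) with hS
  -- mean
  have hmean : E4 (fun θ₁ φ₁ θ₂ φ₂ =>
      ∑ s ∈ S, ((nR : ℝ) - s) *
        Real.cos ((s : ℝ) * a *
          (Real.sin θ₁ * Real.sin φ₁ - Real.sin θ₂ * Real.sin φ₂)))
      = ∑ s ∈ S, ((nR : ℝ) - s) * (J₀ ((s : ℝ) * a / 2)) ^ 4 := by
    exact E4sum S (fun s : ℕ => (nR : ℝ) - s) (fun s : ℕ => (s : ℝ) * a)
  -- second moment
  have hsq : E4 (fun θ₁ φ₁ θ₂ φ₂ =>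
      (∑ s ∈ S, ((nR : ℝ) - s) *
        Real.cos ((s : ℝ) * a *
          (Real.sin θ₁ * Real.sin φ₁ - Real.sin θ₂ * Real.sin φ₂))) ^ 2)
      = ∑ s₂ ∈ S, ∑ s₁ ∈ S,
        ((nR : ℝ) - s₁) * ((nR : ℝ) - s₂) * (1 / 2) *
          ((J₀ (((s₁ : ℝ) + (s₂ : ℝ)) * a / 2)) ^ 4 +
           (J₀ (|(s₁ : ℝ) - (s₂ : ℝ)| * a / 2)) ^ 4) := by
    have hpt : ∀ θ₁ φ₁ θ₂ φ₂ : ℝ,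
        (∑ s ∈ S, ((nR : ℝ) - s) *
          Real.cos ((s : ℝ) * a *
            (Real.sin θ₁ * Real.sin φ₁ - Real.sin θ₂ * Real.sin φ₂))) ^ 2
        = ∑ p ∈ (Finset.univ ×ˢ (S ×ˢ S) : Finset (Bool × ℕ × ℕ)),
            (fun p : Bool × ℕ × ℕ => ((nR : ℝ) - p.2.1) * ((nR : ℝ) - p.2.2) * (1 / 2)) p *
            Real.cos ((fun p : Bool × ℕ × ℕ =>
              cond p.1 (((p.2.1 : ℝ) + (p.2.2 : ℝ)) * a) (((p.2.1 : ℝ) - (p.2.2 : ℝ)) * a)) p *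
              (Real.sin θ₁ * Real.sin φ₁ - Real.sin θ₂ * Real.sin φ₂)) := by
      intro θ₁ φ₁ θ₂ φ₂
      set H := Real.sin θ₁ * Real.sin φ₁ - Real.sin θ₂ * Real.sin φ₂ with hH
      rw [Finset.sum_product, Fintype.sum_bool]
      simp only [Finset.sum_product, cond_true, cond_false]
      rw [sq, Finset.sum_mul_sum, ← Finset.sum_add_distrib]
      refine Finset.sum_congr rfl fun s₁ _ => ?_
      rw [← Finset.sum_add_distrib]
      refine Finset.sum_congr rfl fun s₂ _ => ?_
      rw [show ((s₁ : ℝ) + (s₂ : ℝ)) * a * H = (s₁ : ℝ) * a * H + (s₂ : ℝ) * a * H by ring,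
        show ((s₁ : ℝ) - (s₂ : ℝ)) * a * H = (s₁ : ℝ) * a * H - (s₂ : ℝ) * a * H by ring,
        Real.cos_add, Real.cos_sub]
      ring
    rw [show (fun θ₁ φ₁ θ₂ φ₂ : ℝ =>
        (∑ s ∈ S, ((nR : ℝ) - s) *
          Real.cos ((s : ℝ) * a *
            (Real.sin θ₁ * Real.sin φ₁ - Real.sin θ₂ * Real.sin φ₂))) ^ 2)
      = fun θ₁ φ₁ θ₂ φ₂ : ℝ =>
        ∑ p ∈ (Finset.univ ×ˢ (S ×ˢ S) : Finset (Bool × ℕ × ℕ)),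
            (fun p : Bool × ℕ × ℕ => ((nR : ℝ) - p.2.1) * ((nR : ℝ) - p.2.2) * (1 / 2)) p *
            Real.cos ((fun p : Bool × ℕ × ℕ =>
              cond p.1 (((p.2.1 : ℝ) + (p.2.2 : ℝ)) * a) (((p.2.1 : ℝ) - (p.2.2 : ℝ)) * a)) p *
              (Real.sin θ₁ * Real.sin φ₁ - Real.sin θ₂ * Real.sin φ₂))
      from funext fun θ₁ => funext fun φ₁ => funext fun θ₂ => funext fun φ₂ => hpt θ₁ φ₁ θ₂ φ₂]
    rw [E4sum]
    rw [Finset.sum_product, Fintype.sum_bool]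
    simp only [Finset.sum_product, cond_true, cond_false]
    rw [← Finset.sum_add_distrib]
    rw [Finset.sum_comm]
    refine Finset.sum_congr rfl fun s₂ _ => ?_
    rw [← Finset.sum_add_distrib]
    refine Finset.sum_congr rfl fun s₁ _ => ?_
    rw [J₀_abs]
    ring
  rw [hmean, hsq]
end
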